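/- For every capacity-bounded context-free grammar G = (V, Σ, S, R, κ) with capacity function κ : V → ℕ, there exists a capacity-bounded context-free grammar G' with capacity function constantly 1 such that L(G') = L(G). -/

import Mathlib

/-! Common definitions: symbols, context-free grammars, Ginsburg–Spanier phrase
structure grammars, capacity-bounded derivations, matrix/vector grammars,
finite index, cf Petri nets with place capacities, and language families. -/

inductive Symb (N T : Type) where
  | nt : N → Symb N T
  | tm : T → Symb N T
deriving DecidableEq

namespace CapGram

variable {N T Δ α : Type}

open Classical in
/-- Number of occurrences of the nonterminal `A` in a sentential form. -/
noncomputable def symCount (A : N) : List (Symb N T) → ℕ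
  | [] => 0
  | Symb.nt B :: r => (if B = A then 1 else 0) + symCount A r
  | Symb.tm _ :: r => symCount A r

/-- Total number of nonterminal occurrences in a sentential form. -/
def ntCount : List (Symb N T) → ℕ
  | [] => 0
  | Symb.nt _ :: r => 1 + ntCount r
  | Symb.tm _ :: r => ntCount r

/-- The sentential form `w` respects the capacity function `κ`. -/
def CapOK (κ : N → ℕ) (w : List (Symb N T)) : Prop :=
  ∀ A : N, symCount A w ≤ κ A

/-- A context-free grammar (rules are pairs of a nonterminal and a word). -/
structure CFG (N T : Type) where
  start : N
  rules : Finset (N × List (Symb N T))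

/-- Application of a single context-free rule. -/
def applyRule (r : N × List (Symb N T)) (u v : List (Symb N T)) : Prop :=
  ∃ x y : List (Symb N T), u = x ++ Symb.nt r.1 :: y ∧ v = x ++ r.2 ++ y

def CFG.Step (G : CFG N T) (u v : List (Symb N T)) : Prop :=
  ∃ r ∈ G.rules, applyRule r u v

/-- A derivation step both of whose sentential forms respect the capacity. -/
def CFG.CapStep (G : CFG N T) (κ : N → ℕ) (u v : List (Symb N T)) : Prop :=
  G.Step u v ∧ CapOK κ u ∧ CapOK κ v

/-- A derivation step both of whose sentential forms have at most `k`
nonterminal occurrences in total. -/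
def CFG.IdxStep (G : CFG N T) (k : ℕ) (u v : List (Symb N T)) : Prop :=
  G.Step u v ∧ ntCount u ≤ k ∧ ntCount v ≤ k

/-- The (unrestricted) language of a context-free grammar. -/
def CFG.Lang (G : CFG N T) : Set (List T) :=
  { w | Relation.ReflTransGen G.Step [Symb.nt G.start] (w.map Symb.tm) }

/-- The language of the capacity-bounded grammar `(G, κ)`. -/
def CFG.CapLang (G : CFG N T) (κ : N → ℕ) : Set (List T) :=
  { w | Relation.ReflTransGen (G.CapStep κ) [Symb.nt G.start] (w.map Symb.tm) }

/-- Words with a derivation of index at most `k`. -/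
def CFG.FinLang (G : CFG N T) (k : ℕ) : Set (List T) :=
  { w | Relation.ReflTransGen (G.IdxStep k) [Symb.nt G.start] (w.map Symb.tm) }

/-- A phrase structure grammar due to Ginsburg and Spanier: the left-hand side
of a rule is a nonempty word of nonterminals, encoded as head and tail. -/
structure GSG (N T : Type) where
  start : N
  rules : Finset ((N × List N) × List (Symb N T))

def GSG.Step (G : GSG N T) (u v : List (Symb N T)) : Prop :=
  ∃ r ∈ G.rules, ∃ x y : List (Symb N T),
    u = x ++ (r.1.1 :: r.1.2).map Symb.nt ++ y ∧ v = x ++ r.2 ++ y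

def GSG.CapStep (G : GSG N T) (κ : N → ℕ) (u v : List (Symb N T)) : Prop :=
  G.Step u v ∧ CapOK κ u ∧ CapOK κ v

def GSG.Lang (G : GSG N T) : Set (List T) :=
  { w | Relation.ReflTransGen G.Step [Symb.nt G.start] (w.map Symb.tm) }

def GSG.CapLang (G : GSG N T) (κ : N → ℕ) : Set (List T) :=
  { w | Relation.ReflTransGen (G.CapStep κ) [Symb.nt G.start] (w.map Symb.tm) }

/-- Derivations labeled by their sequence of context-free rules, where every
sentential form (including the first and last) satisfies the invariant `P`. -/
inductive DerivP (P : List (Symb N T) → Prop) :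
    List (N × List (Symb N T)) → List (Symb N T) → List (Symb N T) → Prop
  | nil (u : List (Symb N T)) : P u → DerivP P [] u u
  | cons {r π u v w} : P u → applyRule r u v → DerivP P π v w →
      DerivP P (r :: π) u w

/-- A matrix grammar: a finite set of matrices (sequences of cf rules). -/
structure MG (N T : Type) where
  start : N
  mats : Finset (List (N × List (Symb N T)))

/-- Matrix language: rule sequences are concatenations of matrices. -/
def MG.Lang (G : MG N T) : Set (List T) :=
  { w | ∃ ms : List (List (N × List (Symb N T))),
      (∀ m ∈ ms, m ∈ G.mats) ∧
      DerivP (fun _ => True) ms.flatten [Symb.nt G.start] (w.map Symb.tm) }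

/-- Words with a matrix derivation of index at most `k`. -/
def MG.FinLang (G : MG N T) (k : ℕ) : Set (List T) :=
  { w | ∃ ms : List (List (N × List (Symb N T))),
      (∀ m ∈ ms, m ∈ G.mats) ∧
      DerivP (fun u => ntCount u ≤ k) ms.flatten [Symb.nt G.start] (w.map Symb.tm) }

/-- `Shuffle ms π`: `π` is an interleaving (shuffle) of the lists in `ms`. -/
inductive Shuffle : List (List α) → List α → Prop
  | nil (ms : List (List α)) : (∀ l ∈ ms, l = []) → Shuffle ms []
  | cons {ms₁ : List (List α)} {l : List α} {ms₂ : List (List α)} {π : List α}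
      (a : α) : Shuffle (ms₁ ++ l :: ms₂) π →
      Shuffle (ms₁ ++ (a :: l) :: ms₂) (a :: π)

/-- A vector grammar: like a matrix grammar, but derivations use shuffles. -/
structure VG (N T : Type) where
  start : N
  mats : Finset (List (N × List (Symb N T)))

def VG.Lang (G : VG N T) : Set (List T) :=
  { w | ∃ ms π, (∀ m ∈ ms, m ∈ G.mats) ∧ Shuffle ms π ∧
      DerivP (fun _ => True) π [Symb.nt G.start] (w.map Symb.tm) }

def VG.CapLang (G : VG N T) (κ : N → ℕ) : Set (List T) :=
  { w | ∃ ms π, (∀ m ∈ ms, m ∈ G.mats) ∧ Shuffle ms π ∧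
      DerivP (CapOK κ) π [Symb.nt G.start] (w.map Symb.tm) }

def VG.FinLang (G : VG N T) (k : ℕ) : Set (List T) :=
  { w | ∃ ms π, (∀ m ∈ ms, m ∈ G.mats) ∧ Shuffle ms π ∧
      DerivP (fun u => ntCount u ≤ k) π [Symb.nt G.start] (w.map Symb.tm) }

/-! cf Petri nets: places are in bijection with the nonterminals, transitions
with the rules; firing the transition of rule `A → α` consumes one token from
the place of `A` and adds `|α|_X` tokens to the place of each nonterminal `X`. -/

open Classical in
/-- Firing of the transition corresponding to rule `r`, turning marking `μ`
into marking `μ'`. -/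
noncomputable def ruleFire (r : N × List (Symb N T)) (μ μ' : N → ℕ) : Prop :=
  1 ≤ μ r.1 ∧ ∀ A, μ' A = μ A - (if A = r.1 then 1 else 0) + symCount A r.2

/-- Occurrence sequences of the cf Petri net of `G`, all of whose markings
(including initial and final) satisfy the validity predicate `P`. -/
inductive FireSeqP (G : CFG N T) (P : (N → ℕ) → Prop) :
    List (N × List (Symb N T)) → (N → ℕ) → (N → ℕ) → Prop
  | nil (μ : N → ℕ) : P μ → FireSeqP G P [] μ μ
  | cons {r π μ μ' μ''} : r ∈ G.rules → P μ → ruleFire r μ μ' →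
      FireSeqP G P π μ' μ'' → FireSeqP G P (r :: π) μ μ''

open Classical in
/-- The initial marking: one token on the place of the start symbol. -/
noncomputable def initMark (G : CFG N T) : N → ℕ :=
  fun A => if A = G.start then 1 else 0

/-- The language of `G` controlled by its cf Petri net restricted to markings
satisfying `P` (e.g. a place capacity constraint). -/
def CFG.PNLang (G : CFG N T) (P : (N → ℕ) → Prop) : Set (List T) :=
  { w | ∃ π μ, DerivP (fun _ => True) π [Symb.nt G.start] (w.map Symb.tm) ∧
      FireSeqP G P π (initMark G) μ }

/-! Language families over a terminal alphabet `T`. -/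

/-- Context-free languages of finite index. -/
def CFfin (T : Type) : Set (Set (List T)) :=
  { L | ∃ (N : Type) (_ : Fintype N) (G : CFG N T) (k : ℕ),
      L = G.Lang ∧ G.Lang ⊆ G.FinLang k }

/-- Languages of capacity-bounded context-free grammars. -/
def CFcb (T : Type) : Set (Set (List T)) :=
  { L | ∃ (N : Type) (_ : Fintype N) (G : CFG N T) (κ : N → ℕ),
      L = G.CapLang κ }

/-- Languages of capacity-bounded Ginsburg–Spanier phrase structure grammars. -/
def GScb (T : Type) : Set (Set (List T)) :=
  { L | ∃ (N : Type) (_ : Fintype N) (G : GSG N T) (κ : N → ℕ),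
      L = G.CapLang κ }

/-- Matrix languages of finite index. -/
def MATfin (T : Type) : Set (Set (List T)) :=
  { L | ∃ (N : Type) (_ : Fintype N) (G : MG N T) (k : ℕ),
      L = G.Lang ∧ G.Lang ⊆ G.FinLang k }

/-- Capacity-bounded vector languages (erasing rules allowed). -/
def Vcb (T : Type) : Set (Set (List T)) :=
  { L | ∃ (N : Type) (_ : Fintype N) (G : VG N T) (κ : N → ℕ),
      L = G.CapLang κ }

/-- Vector languages of finite index (erasing rules allowed). -/
def Vfin (T : Type) : Set (Set (List T)) :=
  { L | ∃ (N : Type) (_ : Fintype N) (G : VG N T) (k : ℕ),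
      L = G.Lang ∧ G.Lang ⊆ G.FinLang k }

/-- Languages of grammars controlled by cf Petri nets with place capacities. -/
def PNcap (T : Type) : Set (Set (List T)) :=
  { L | ∃ (N : Type) (_ : Fintype N) (G : CFG N T) (κ : N → ℕ),
      L = G.PNLang (fun μ => ∀ A, μ A ≤ κ A) }


/-! ### Auxiliary development for the capacity-1 normal form -/

section CapOne

open Classical

variable {N T : Type}

/-- Indexed copies of nonterminals: `κ A` copies of `A`. -/
abbrev Idx (κ : N → ℕ) : Type := Σ A : N, Fin (κ A)

/-- Projection back to the original symbols. -/
def proj (κ : N → ℕ) : Symb (Idx κ) T → Symb N T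
  | .nt B => .nt B.1
  | .tm a => .tm a

lemma symCount_append (A : N) (u v : List (Symb N T)) :
    symCount A (u ++ v) = symCount A u + symCount A v := by
  induction u with
  | nil => simp [symCount]
  | cons s r ih => cases s <;> simp [symCount, ih] <;> omega

lemma symCount_map_proj (κ : N → ℕ) (A : N) (w : List (Symb (Idx κ) T)) :
    symCount A (w.map (proj κ)) = ∑ i : Fin (κ A), symCount (⟨A, i⟩ : Idx κ) w := by
  induction w with
  | nil => simp [symCount]
  | cons s r ih =>
    cases s with
    | tm a => simpa [proj, symCount] using ih
    | nt B =>
      obtain ⟨B1, B2⟩ := B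
      simp only [List.map_cons, proj, symCount, ih, Finset.sum_add_distrib]
      congr 1
      by_cases h : B1 = A
      · subst h
        simp [Sigma.mk.inj_iff]
      · simp [Sigma.mk.inj_iff, h]

lemma map_proj_tm (κ : N → ℕ) {w : List T} :
    ∀ {u : List (Symb (Idx κ) T)}, u.map (proj κ) = w.map Symb.tm → u = w.map Symb.tm := by
  induction w with
  | nil => intro u h; simpa using h
  | cons a r ih =>
    intro u h
    cases u with
    | nil => simp at h
    | cons s t =>
      cases s with
      | nt B => simp [proj] at h
      | tm b =>
        simp only [List.map_cons, proj, List.cons.injEq, Symb.tm.injEq] at h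
        simp [h.1, ih h.2]

lemma exists_decomp (κ : N → ℕ) :
    ∀ (x : List (Symb N T)) (A : N) (y : List (Symb N T)) (u' : List (Symb (Idx κ) T)),
      u'.map (proj κ) = x ++ Symb.nt A :: y →
      ∃ (x' : List (Symb (Idx κ) T)) (i : Fin (κ A)) (y' : List (Symb (Idx κ) T)),
        u' = x' ++ Symb.nt ⟨A, i⟩ :: y' ∧ x'.map (proj κ) = x ∧ y'.map (proj κ) = y := by
  intro x
  induction x with
  | nil =>
    intro A y u' h
    cases u' with
    | nil => simp at h
    | cons s t =>
      cases s with
      | tm b => simp [proj] at h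
      | nt B =>
        obtain ⟨B1, B2⟩ := B
        simp only [List.map_cons, proj, List.nil_append, List.cons.injEq, Symb.nt.injEq] at h
        obtain ⟨rfl, ht⟩ := h
        exact ⟨[], B2, t, by simp, rfl, ht⟩
  | cons a xs ih =>
    intro A y u' h
    cases u' with
    | nil => simp at h
    | cons s t =>
      simp only [List.map_cons, List.cons_append, List.cons.injEq] at h
      obtain ⟨hs, ht⟩ := h
      obtain ⟨x', i, y', rfl, hx, hy⟩ := ih A y t ht
      exact ⟨s :: x', i, y', by simp, by simp [hs, hx], hy⟩

/-- All liftings of a word to indexed copies. -/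
noncomputable def lifts (κ : N → ℕ) : List (Symb N T) → Finset (List (Symb (Idx κ) T))
  | [] => {[]}
  | Symb.tm a :: r => (lifts κ r).image (Symb.tm a :: ·)
  | Symb.nt A :: r =>
      (Finset.univ : Finset (Fin (κ A))).biUnion fun i =>
        (lifts κ r).image (Symb.nt ⟨A, i⟩ :: ·)

lemma mem_lifts (κ : N → ℕ) :
    ∀ (α : List (Symb N T)) (α' : List (Symb (Idx κ) T)),
      α' ∈ lifts κ α ↔ α'.map (proj κ) = α := by
  intro α
  induction α with
  | nil =>
    intro α'
    simp only [lifts, Finset.mem_singleton, List.map_eq_nil_iff]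
  | cons s r ih =>
    intro α'
    cases s with
    | tm a =>
      simp only [lifts, Finset.mem_image]
      constructor
      · rintro ⟨β, hβ, rfl⟩
        simp [proj, (ih β).1 hβ]
      · intro h
        cases α' with
        | nil => simp at h
        | cons s' t =>
          cases s' with
          | nt B => simp [proj] at h
          | tm b =>
            simp only [List.map_cons, proj, List.cons.injEq, Symb.tm.injEq] at h
            exact ⟨t, (ih t).2 h.2, by simp [h.1]⟩
    | nt A =>
      simp only [lifts, Finset.mem_biUnion, Finset.mem_image, Finset.mem_univ, true_and]
      constructor
      · rintro ⟨i, β, hβ, rfl⟩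
        simp [proj, (ih β).1 hβ]
      · intro h
        cases α' with
        | nil => simp at h
        | cons s' t =>
          cases s' with
          | tm b => simp [proj] at h
          | nt B =>
            obtain ⟨B1, B2⟩ := B
            simp only [List.map_cons, proj, List.cons.injEq, Symb.nt.injEq] at h
            obtain ⟨rfl, ht⟩ := h
            exact ⟨B2, t, (ih t).2 ht, rfl⟩

/-- The rules of the capacity-1 grammar. -/
noncomputable def liftRules (G : CFG N T) (κ : N → ℕ) [Fintype N] :
    Finset (Idx κ × List (Symb (Idx κ) T)) :=
  G.rules.biUnion fun r =>
    ((Finset.univ : Finset (Idx κ)).filter (fun B => B.1 = r.1)) ×ˢ lifts κ r.2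

lemma mem_liftRules {G : CFG N T} {κ : N → ℕ} [Fintype N]
    {B : Idx κ} {α' : List (Symb (Idx κ) T)} :
    (B, α') ∈ liftRules G κ ↔ ∃ r ∈ G.rules, B.1 = r.1 ∧ α'.map (proj κ) = r.2 := by
  simp [liftRules, Finset.mem_biUnion, Finset.mem_product, Finset.mem_filter, mem_lifts,
    and_assoc]

/-- Choose a lift with fresh, pairwise distinct indices, avoiding `c`. -/
lemma exists_lift (κ : N → ℕ) :
    ∀ (α : List (Symb N T)) (c : ∀ A : N, Finset (Fin (κ A))),
    (∀ A, (c A).card + symCount A α ≤ κ A) →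
    ∃ α' : List (Symb (Idx κ) T), α'.map (proj κ) = α ∧
      ∀ (A : N) (i : Fin (κ A)),
        symCount (⟨A, i⟩ : Idx κ) α' ≤ if i ∈ c A then 0 else 1 := by
  intro α
  induction α with
  | nil =>
    intro c _
    refine ⟨[], rfl, fun A i => ?_⟩
    simp only [symCount]
    split <;> omega
  | cons s r ih =>
    intro c hc
    cases s with
    | tm a =>
      obtain ⟨β, hβ, hb⟩ := ih c (fun A => by have := hc A; simpa [symCount] using this)
      refine ⟨Symb.tm a :: β, by simp [proj, hβ], fun A i => ?_⟩
      simpa [symCount] using hb A i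
    | nt A₀ =>
      have h0 : (c A₀).card + (1 + symCount A₀ r) ≤ κ A₀ := by
        have := hc A₀; simpa [symCount] using this
      have hex : ∃ i₀ : Fin (κ A₀), i₀ ∉ c A₀ := by
        by_contra h
        push_neg at h
        have : c A₀ = Finset.univ := Finset.eq_univ_iff_forall.mpr h
        rw [this] at h0
        simp only [Finset.card_univ, Fintype.card_fin] at h0
        omega
      obtain ⟨i₀, hi₀⟩ := hex
      set c' : ∀ A : N, Finset (Fin (κ A)) := Function.update c A₀ (insert i₀ (c A₀)) with hc'
      have hc'A₀ : c' A₀ = insert i₀ (c A₀) := by simp [hc']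
      have hc'ne : ∀ A, A ≠ A₀ → c' A = c A := by
        intro A hA; simp [hc', Function.update_of_ne hA]
      have hcards : ∀ A, (c' A).card + symCount A r ≤ κ A := by
        intro A
        by_cases hA : A = A₀
        · rw [hA, hc'A₀]
          have := Finset.card_insert_le i₀ (c A₀)
          omega
        · rw [hc'ne A hA]
          have := hc A
          have hne : A₀ ≠ A := fun h => hA h.symm
          simp only [symCount, if_neg hne] at this
          omega
      obtain ⟨β, hβ, hb⟩ := ih c' hcards
      refine ⟨Symb.nt ⟨A₀, i₀⟩ :: β, by simp [proj, hβ], fun A i => ?_⟩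
      have hbAi := hb A i
      by_cases hA : A₀ = A
      · subst hA
        rw [hc'A₀] at hbAi
        by_cases hi : i₀ = i
        · subst hi
          rw [if_pos (Finset.mem_insert_self _ _)] at hbAi
          have h1 : symCount (⟨A₀, i₀⟩ : Idx κ) (Symb.nt ⟨A₀, i₀⟩ :: β)
              = 1 + symCount (⟨A₀, i₀⟩ : Idx κ) β := by simp [symCount]
          rw [h1, if_neg hi₀]
          omega
        · have : (⟨A₀, i₀⟩ : Idx κ) ≠ ⟨A₀, i⟩ := by
            simp [Sigma.mk.inj_iff, hi]
          simp only [symCount, if_neg this]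
          by_cases him : i ∈ c A₀
          · rw [if_pos him]
            rw [if_pos (Finset.mem_insert_of_mem him)] at hbAi
            omega
          · rw [if_neg him]
            split at hbAi <;> omega
      · have : (⟨A₀, i₀⟩ : Idx κ) ≠ ⟨A, i⟩ := by
          simp [Sigma.mk.inj_iff, hA]
        simp only [symCount, if_neg this]
        rw [hc'ne A (fun h => hA h.symm)] at hbAi
        simpa using hbAi

variable [Fintype N]

/-- The capacity-1 grammar (for a given start index). -/
noncomputable def liftCFG (G : CFG N T) (κ : N → ℕ) (i₀ : Fin (κ G.start)) :
    CFG (Idx κ) T :=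
  ⟨⟨G.start, i₀⟩, liftRules G κ⟩

lemma capOK_of_one {κ : N → ℕ} {w : List (Symb (Idx κ) T)}
    (h : CapOK (fun _ => 1) w) : CapOK κ (w.map (proj κ)) := by
  intro A
  rw [symCount_map_proj]
  calc ∑ i : Fin (κ A), symCount (⟨A, i⟩ : Idx κ) w
      ≤ ∑ _i : Fin (κ A), 1 := Finset.sum_le_sum (fun i _ => h ⟨A, i⟩)
    _ = κ A := by simp

lemma step_proj {G : CFG N T} {κ : N → ℕ} {i₀ : Fin (κ G.start)}
    {u' v' : List (Symb (Idx κ) T)}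
    (h : (liftCFG G κ i₀).CapStep (fun _ => 1) u' v') :
    G.CapStep κ (u'.map (proj κ)) (v'.map (proj κ)) := by
  obtain ⟨⟨⟨B, α'⟩, hr, x', y', rfl, rfl⟩, hu, hv⟩ := h
  obtain ⟨r, hrG, hB, hα⟩ := mem_liftRules.1 hr
  refine ⟨⟨r, hrG, x'.map (proj κ), y'.map (proj κ), ?_, ?_⟩, capOK_of_one hu, capOK_of_one hv⟩
  · simp [← hB, proj]
  · simp [hα]

lemma step_lift {G : CFG N T} {κ : N → ℕ} {i₀ : Fin (κ G.start)}
    {u v : List (Symb N T)} (h : G.CapStep κ u v)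
    {u' : List (Symb (Idx κ) T)} (hu : u'.map (proj κ) = u)
    (hcap : CapOK (fun _ => 1) u') :
    ∃ v', v'.map (proj κ) = v ∧ CapOK (fun _ => 1) v' ∧ (liftCFG G κ i₀).Step u' v' := by
  obtain ⟨⟨r, hrG, x, y, rfl, rfl⟩, _, hcv⟩ := h
  obtain ⟨x', j, y', rfl, hx, hy⟩ := exists_decomp κ x r.1 y u' hu
  set c : ∀ A : N, Finset (Fin (κ A)) :=
    fun A => Finset.univ.filter (fun i => 1 ≤ symCount (⟨A, i⟩ : Idx κ) (x' ++ y')) with hcdef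
  have hcard : ∀ A, (c A).card + symCount A r.2 ≤ κ A := by
    intro A
    have h1 : (c A).card ≤ ∑ i : Fin (κ A), symCount (⟨A, i⟩ : Idx κ) (x' ++ y') := by
      rw [Finset.card_eq_sum_ones]
      calc ∑ _i ∈ c A, 1 ≤ ∑ i ∈ c A, symCount (⟨A, i⟩ : Idx κ) (x' ++ y') :=
            Finset.sum_le_sum (fun i hi => (Finset.mem_filter.1 hi).2)
        _ ≤ ∑ i : Fin (κ A), symCount (⟨A, i⟩ : Idx κ) (x' ++ y') :=
            Finset.sum_le_sum_of_subset (Finset.subset_univ _)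
    rw [← symCount_map_proj, List.map_append, hx, hy] at h1
    have h2 := hcv A
    rw [symCount_append, symCount_append] at h2
    rw [symCount_append] at h1
    omega
  obtain ⟨α', hα, hαb⟩ := exists_lift κ r.2 c hcard
  refine ⟨x' ++ α' ++ y', by simp [hx, hy, hα], ?_, ?_⟩
  · rintro ⟨A, i⟩
    show symCount (⟨A, i⟩ : Idx κ) (x' ++ α' ++ y') ≤ 1
    have hctx : symCount (⟨A, i⟩ : Idx κ) (x' ++ y') ≤
        symCount (⟨A, i⟩ : Idx κ) (x' ++ Symb.nt ⟨r.1, j⟩ :: y') := by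
      rw [symCount_append, symCount_append]
      simp only [symCount]
      split <;> omega
    have h1 : symCount (⟨A, i⟩ : Idx κ) (x' ++ y') ≤ 1 :=
      le_trans hctx (hcap ⟨A, i⟩ : _ ≤ 1)
    have h2 := hαb A i
    rw [symCount_append, symCount_append]
    rw [symCount_append] at h1
    by_cases hm : i ∈ c A
    · rw [if_pos hm] at h2
      omega
    · rw [if_neg hm] at h2
      have : ¬ (1 ≤ symCount (⟨A, i⟩ : Idx κ) (x' ++ y')) := by
        intro h
        exact hm (Finset.mem_filter.2 ⟨Finset.mem_univ _, h⟩)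
      rw [symCount_append] at this
      omega
  · exact ⟨(⟨r.1, j⟩, α'), mem_liftRules.2 ⟨r, hrG, rfl, hα⟩, x', y', rfl, rfl⟩

end CapOne

/-- every capacity-bounded context-free grammar has an equivalent
one with capacity function constantly 1. -/
theorem capacity_one_normal_form_cfg {T : Type} (N : Type) [Fintype N]
    (G : CFG N T) (κ : N → ℕ) :
    ∃ (N' : Type) (_ : Fintype N') (G' : CFG N' T),
      CFG.CapLang G' (fun _ => 1) = G.CapLang κ := by
  by_cases h0 : 0 < κ G.start
  · refine ⟨Idx κ, inferInstance, liftCFG G κ ⟨0, h0⟩, ?_⟩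
    ext w
    constructor
    · intro h
      have := Relation.ReflTransGen.lift (List.map (proj κ))
        (fun _ _ hs => step_proj hs) _ _ h
      simpa [Function.onFun, liftCFG, proj, List.map_map, Function.comp_def, CFG.CapLang] using this
    · intro h
      have key : ∀ {u : List (Symb N T)},
          Relation.ReflTransGen (G.CapStep κ) u (w.map Symb.tm) →
          ∀ {u' : List (Symb (Idx κ) T)}, u'.map (proj κ) = u →
            CapOK (fun _ => 1) u' →
            Relation.ReflTransGen ((liftCFG G κ ⟨0, h0⟩).CapStep (fun _ => 1)) u'
              (w.map Symb.tm) := by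
        intro u h
        induction h using Relation.ReflTransGen.head_induction_on with
        | refl =>
          intro u' hm _
          rw [map_proj_tm κ hm]
        | head hstep _ ih =>
          intro u' hm hc
          obtain ⟨v', hv, hc', hstep'⟩ := step_lift (i₀ := ⟨0, h0⟩) hstep hm hc
          exact Relation.ReflTransGen.head ⟨hstep', hc, hc'⟩ (ih hv hc')
      refine key h ?_ ?_
      · simp [liftCFG, proj]
      · rintro ⟨A, i⟩
        simp only [symCount]
        split <;> omega
  · -- both languages are empty
    refine ⟨Unit, inferInstance, ⟨(), ∅⟩, ?_⟩
    ext w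
    constructor
    · intro h
      rcases Relation.ReflTransGen.cases_head h with heq | ⟨c, ⟨⟨r, hr, _⟩, _, _⟩, _⟩
      · cases w with
        | nil => simp at heq
        | cons a t => simp at heq
      · simp at hr
    · intro h
      rcases Relation.ReflTransGen.cases_head h with heq | ⟨c, ⟨_, hcap, _⟩, _⟩
      · cases w with
        | nil => simp at heq
        | cons a t => simp at heq
      · have := hcap G.start
        simp [symCount] at this
        omega

end CapGram
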